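/- For every i ≥ 2, there exist positive integers α_1, …, α_i such that α_j divides N_j and α_j > 1 for each 1 ≤ j ≤ i, and the multiplicative order of c_i equals ∏_{j=1}^{i} α_j. -/

import Mathlib

/-!
Put `q_n = 2 ^ 2 ^ n`. Each `c_n` is a root of `X² + X + a_{n-1}` outside `L_{n-1}`, so
`[L_n : L_{n-1}] = 2`, `#L_{n-1} = q_n`, and `L_{n-1}` is exactly the set of roots of
`X^{q_n} - X`. The Frobenius `x ↦ x^{q_n}` fixes `a_{n-1}`, hence permutes the roots `c_n` and
`c_n + 1`, and cannot fix `c_n`; so `c_n^{N_n} = c_n (c_n + 1) = a_{n-1}`. Therefore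
`O(c_n) = O(a_{n-1}) · m` with `m = gcd(O(c_n), N_n)`, and `m ≠ 1` since otherwise
`O(c_n) ∣ q_n - 1`, i.e. `c_n ∈ L_{n-1}`. Moreover `a_n = c_n^{q_n + 2}`, and
`q_n + 2 = 2 (2^{q_n - 1} + 1)` is prime to every `N_j` with `j ≥ 1`, because `2` has order
`2^{j+1}` modulo any prime factor of `N_j`. Hence `O(a_n) = O(c_n)` for `n ≥ 2`, and the
factorisation propagates from `O(a_1) = 15 / gcd(15, 6) = 5`.
-/

/-- The `j`-th Fermat number `N_j = 2^(2^j) + 1`. -/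
def fermatN (j : ℕ) : ℕ := 2 ^ 2 ^ j + 1

/-- `conwayL c n` is the subfield `L_{n-1}` of the algebraic closure of `F_2`
generated over `F_2` by `c 0, …, c (n-1)`; in particular `conwayL c 0 = ⊥ = F_2`. -/
noncomputable def conwayL (c : ℕ → AlgebraicClosure (ZMod 2)) (n : ℕ) :
    IntermediateField (ZMod 2) (AlgebraicClosure (ZMod 2)) :=
  IntermediateField.adjoin (ZMod 2) (c '' Set.Iio n)

open Finset Polynomial IntermediateField Module

theorem CharTwo.eq_or_eq_add_one_of_sq_add_self_eq {R : Type*} [CommRing R] [NoZeroDivisors R]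
    [CharP R 2] {x y : R} (h : y ^ 2 + y = x ^ 2 + x) : y = x ∨ y = x + 1 := by
  have key : (y + x) * (y + x + 1) = 0 := by
    linear_combination h + (x * y + x ^ 2 + x) * CharTwo.two_eq_zero (R := R)
  rcases mul_eq_zero.mp key with h | h
  · exact Or.inl (by linear_combination h - x * CharTwo.two_eq_zero (R := R))
  · exact Or.inr (by linear_combination h - (x + 1) * CharTwo.two_eq_zero (R := R))

theorem orderOf_dvd_sub_one_iff_pow_eq_self {G₀ : Type*} [GroupWithZero G₀] {x : G₀} {q : ℕ}
    (hx : x ≠ 0) (hq : q ≠ 0) : orderOf x ∣ q - 1 ↔ x ^ q = x := by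
  rw [orderOf_dvd_iff_pow_eq_one, ← mul_eq_right₀ hx, ← pow_succ, Nat.sub_add_cancel
    (Nat.one_le_iff_ne_zero.mpr hq)]

theorem orderOf_eq_orderOf_pow_mul_gcd {G : Type*} [Monoid G] (x : G) {n : ℕ} (hn : n ≠ 0) :
    orderOf x = orderOf (x ^ n) * (orderOf x).gcd n := by
  rw [orderOf_pow' x hn, Nat.div_mul_cancel (Nat.gcd_dvd_left _ _)]

theorem Subfield.mem_of_pow_natCard_eq_self {L : Type*} [Field L] (E : Subfield L) [Finite E]
    {x : L} (hx : x ^ Nat.card E = x) : x ∈ E := by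
  have : Fintype E := Fintype.ofFinite E
  set P : E[X] := X ^ Fintype.card E - X
  have hroots : P.roots.map E.subtype = (P.map E.subtype).roots := by
    refine roots_map_of_injective_of_card_eq_natDegree E.subtype_injective ?_
    rw [FiniteField.roots_X_pow_card_sub_X, FiniteField.X_pow_card_sub_X_natDegree_eq E
      Fintype.one_lt_card]
    rfl
  have hxroot : x ∈ (P.map E.subtype).roots := by
    rw [mem_roots (map_ne_zero (FiniteField.X_pow_card_sub_X_ne_zero E Fintype.one_lt_card))]
    simp [← Nat.card_eq_fintype_card, hx]
  rw [← hroots, FiniteField.roots_X_pow_card_sub_X] at hxroot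
  obtain ⟨a, -, rfl⟩ := Multiset.mem_map.mp hxroot
  exact a.2

theorem IntermediateField.finrank_adjoin_simple_eq_two {K L : Type*} [Field K] [Field L]
    [Algebra K L] {x : L} {p : K[X]} (hp : p.natDegree = 2) (hpx : aeval x p = 0)
    (hx : x ∉ (⊥ : IntermediateField K L)) : finrank K K⟮x⟯ = 2 := by
  have hp0 : p ≠ 0 := by rintro rfl; simp at hp
  have hint : IsIntegral K x := (IsAlgebraic.isIntegral ⟨p, hp0, hpx⟩)
  rw [adjoin.finrank hint]
  have hle : (minpoly K x).natDegree ≤ 2 :=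
    hp ▸ natDegree_le_natDegree (minpoly.degree_le_of_ne_zero K x hp0 hpx)
  have hge : 2 ≤ (minpoly K x).natDegree := (minpoly.two_le_natDegree_iff hint).mpr hx
  omega

theorem IntermediateField.notMem_bot_of_sq_add_self_add_one {L : Type*} [Field L]
    [Algebra (ZMod 2) L] {x : L} (h : x ^ 2 + x + 1 = 0) :
    x ∉ (⊥ : IntermediateField (ZMod 2) L) := by
  rintro ⟨r, rfl⟩
  have hr : r ^ 2 + r + 1 = 1 := by fin_cases r <;> rfl
  change algebraMap (ZMod 2) L r ^ 2 + algebraMap (ZMod 2) L r + 1 = 0 at h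
  rw [← map_pow, ← map_add, ← map_one (algebraMap (ZMod 2) L), ← map_add, hr, map_one] at h
  exact one_ne_zero h

theorem Nat.coprime_fermatNumber_two_pow_two_pow_add_two {j : ℕ} (hj : j ≠ 0) (n : ℕ) :
    (fermatNumber j).Coprime (2 ^ 2 ^ (n + 1) + 2) := by
  refine Nat.coprime_of_dvd fun p hp hpj hpn => ?_
  have : Fact p.Prime := ⟨hp⟩
  have : Fact (2 < p) := ⟨hp.two_le.lt_of_ne ((odd_fermatNumber j).ne_two_of_dvd_nat hpj).symm⟩
  have hj2 : (2 : ZMod p) ^ 2 ^ j = -1 := by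
    rw [eq_neg_iff_add_eq_zero]
    exact_mod_cast (ZMod.natCast_eq_zero_iff _ p).mpr hpj
  have hord : orderOf (2 : ZMod p) = 2 ^ (j + 1) :=
    orderOf_eq_prime_pow (by rw [hj2]; exact ZMod.neg_one_ne_one)
      (by rw [pow_succ, pow_mul, hj2, neg_one_sq])
  obtain ⟨m, hm⟩ : ∃ m, 2 ^ (n + 1) = 2 * m + 2 :=
    ⟨2 ^ n - 1, by have := Nat.one_le_two_pow (n := n); rw [pow_succ]; omega⟩
  have hn : (2 : ZMod p) ^ (2 * m + 1) = -1 := by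
    have h := (ZMod.natCast_eq_zero_iff _ p).mpr hpn
    push_cast [hm, pow_succ] at h
    have h2 : (2 : ZMod p) ≠ 0 := fun h2 => by
      rw [h2, zero_pow (by positivity), zero_eq_neg] at hj2
      exact one_ne_zero hj2
    have h' : (2 : ZMod p) * (2 ^ (2 * m + 1) + 1) = 0 := by linear_combination h
    exact eq_neg_of_add_eq_zero_left ((_root_.mul_eq_zero.mp h').resolve_left h2)
  have hdvd : 2 ^ (j + 1) ∣ 2 * (2 * m + 1) :=
    hord ▸ orderOf_dvd_of_pow_eq_one (by rw [pow_mul', hn, neg_one_sq])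
  have h4 : 4 ∣ 2 * (2 * m + 1) := (pow_dvd_pow 2 (show 2 ≤ j + 1 by omega)).trans hdvd
  omega

def IsFermatProduct (i n : ℕ) : Prop :=
  ∃ α : ℕ → ℕ, (∀ j : ℕ, 1 ≤ j → j ≤ i → α j ∣ fermatN j ∧ 1 < α j) ∧
    n = ∏ j ∈ Icc 1 i, α j

theorem isFermatProduct_zero_one : IsFermatProduct 0 1 :=
  ⟨fun _ => 2, fun _ hj hj0 => absurd hj0 (by omega), rfl⟩

theorem IsFermatProduct.mul {i n m : ℕ} (h : IsFermatProduct i n) (hm : m ∣ fermatN (i + 1))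
    (hm1 : 1 < m) : IsFermatProduct (i + 1) (n * m) := by
  obtain ⟨α, hα, rfl⟩ := h
  refine ⟨Function.update α (i + 1) m, fun j hj1 hj2 => ?_, ?_⟩
  · rcases (show j ≤ i ∨ j = i + 1 by omega) with hj | rfl
    · rw [Function.update_of_ne (by omega)]
      exact hα j hj1 hj
    · rw [Function.update_self]
      exact ⟨hm, hm1⟩
  · rw [prod_Icc_succ_top (by omega), Function.update_self]
    congr 1
    exact prod_congr rfl fun j hj => (Function.update_of_ne
      ((mem_Icc.mp hj).2.trans_lt i.lt_succ_self).ne _ _).symm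

theorem IsFermatProduct.coprime {i n : ℕ} (h : IsFermatProduct i n) (k : ℕ) :
    n.Coprime (2 ^ 2 ^ (k + 1) + 2) := by
  obtain ⟨α, hα, rfl⟩ := h
  refine Nat.Coprime.prod_left fun j hj => ?_
  obtain ⟨hj1, hji⟩ := mem_Icc.mp hj
  exact (Nat.coprime_fermatNumber_two_pow_two_pow_add_two (by omega) k).coprime_dvd_left
    (hα j hj1 hji).1

local notation "F" => AlgebraicClosure (ZMod 2)

theorem apply_mem_conwayL (c : ℕ → F) {j n : ℕ} (h : j < n) : c j ∈ conwayL c n :=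
  subset_adjoin _ _ ⟨j, h, rfl⟩

theorem prod_mem_conwayL (c : ℕ → F) (n : ℕ) : ∏ j ∈ range n, c j ∈ conwayL c n :=
  prod_mem fun _ hj => apply_mem_conwayL c (mem_range.mp hj)

theorem conwayL_zero (c : ℕ → F) : conwayL c 0 = ⊥ := by
  simp [conwayL]

theorem conwayL_succ (c : ℕ → F) (n : ℕ) :
    conwayL c (n + 1) = (conwayL c n)⟮c n⟯.restrictScalars (ZMod 2) := by
  rw [restrictScalars_adjoin, conwayL, conwayL, Set.union_comm, ← Set.insert_eq,
    adjoin_insert_adjoin, Set.Iio_add_one_eq_Iic, ← Set.Iio_insert, Set.image_insert_eq]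

/-- The two defining conditions, with the case `n = 0` included: the empty product is `1`,
and `conwayL c 0 = ⊥` plays the role of `L_{-1} = F_2`. -/
structure IsConwayTower (c : ℕ → F) : Prop where
  sq_add_self_add_prod_eq_zero : ∀ n, c n ^ 2 + c n + ∏ j ∈ range n, c j = 0
  notMem_conwayL : ∀ n, c n ∉ conwayL c n

namespace IsConwayTower

variable {c : ℕ → F}

theorem natCard_conwayL (hc : IsConwayTower c) (n : ℕ) :
    Nat.card (conwayL c n) = 2 ^ 2 ^ n := by
  induction n with
  | zero => simp [conwayL_zero, Nat.card_congr (botEquiv (ZMod 2) F).toEquiv]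
  | succ n ih =>
    set E := conwayL c n
    have hquad : aeval (c n) (X ^ 2 + X + C ⟨_, prod_mem_conwayL c n⟩ : E[X]) = 0 := by
      simpa using hc.sq_add_self_add_prod_eq_zero n
    have hdeg : (X ^ 2 + X + C ⟨_, prod_mem_conwayL c n⟩ : E[X]).natDegree = 2 := by
      compute_degree!
    have hnot : c n ∉ (⊥ : IntermediateField E F) := by
      rintro ⟨y, hy⟩
      exact hc.notMem_conwayL n (hy ▸ y.2)
    have hrank := finrank_adjoin_simple_eq_two hdeg hquad hnot
    have : Module.Finite E E⟮c n⟯ := Module.finite_of_finrank_eq_succ hrank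
    rw [conwayL_succ, pow_succ, pow_mul, ← ih]
    have hcard := Module.natCard_eq_pow_finrank (K := E) (V := E⟮c n⟯)
    rwa [hrank] at hcard

theorem finite_conwayL (hc : IsConwayTower c) (n : ℕ) : Finite (conwayL c n) :=
  Nat.finite_of_card_ne_zero (by rw [hc.natCard_conwayL]; positivity)

theorem mem_conwayL_iff (hc : IsConwayTower c) {n : ℕ} {x : F} :
    x ∈ conwayL c n ↔ x ^ 2 ^ 2 ^ n = x := by
  have := hc.finite_conwayL n
  have : Fintype (conwayL c n) := Fintype.ofFinite _
  rw [← hc.natCard_conwayL n, Nat.card_eq_fintype_card]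
  refine ⟨fun hx => congrArg Subtype.val (FiniteField.pow_card (⟨x, hx⟩ : conwayL c n)),
    fun hx => (conwayL c n).toSubfield.mem_of_pow_natCard_eq_self ?_⟩
  rwa [← Nat.card_eq_fintype_card] at hx

theorem ne_zero (hc : IsConwayTower c) (n : ℕ) : c n ≠ 0 :=
  fun h => hc.notMem_conwayL n (h ▸ zero_mem _)

theorem pow_two_pow_two_pow (hc : IsConwayTower c) (n : ℕ) : c n ^ 2 ^ 2 ^ n = c n + 1 := by
  have hquad := hc.sq_add_self_add_prod_eq_zero n
  have h := congrArg (iterateFrobenius F 2 (2 ^ n)) hquad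
  simp only [map_add, map_pow, map_zero, iterateFrobenius_def,
    hc.mem_conwayL_iff.mp (prod_mem_conwayL c n)] at h
  refine (CharTwo.eq_or_eq_add_one_of_sq_add_self_eq (by linear_combination h - hquad)).resolve_left
    fun hfix => hc.notMem_conwayL n (hc.mem_conwayL_iff.mpr hfix)

theorem pow_fermatN (hc : IsConwayTower c) (n : ℕ) :
    c n ^ fermatN n = ∏ j ∈ range n, c j := by
  rw [fermatN, pow_succ, hc.pow_two_pow_two_pow]
  linear_combination hc.sq_add_self_add_prod_eq_zero n -
    (∏ j ∈ range n, c j) * CharTwo.two_eq_zero (R := F)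

theorem prod_ne_zero (hc : IsConwayTower c) (n : ℕ) : ∏ j ∈ range n, c j ≠ 0 :=
  prod_ne_zero_iff.mpr fun j _ => hc.ne_zero j

theorem mem_conwayL_iff_orderOf_dvd (hc : IsConwayTower c) {n : ℕ} {x : F} (hx : x ≠ 0) :
    x ∈ conwayL c n ↔ orderOf x ∣ 2 ^ 2 ^ n - 1 := by
  rw [hc.mem_conwayL_iff, orderOf_dvd_sub_one_iff_pow_eq_self hx (by positivity)]

theorem exists_orderOf_eq_mul (hc : IsConwayTower c) (n : ℕ) :
    ∃ m, m ∣ fermatN n ∧ 1 < m ∧ orderOf (c n) = orderOf (∏ j ∈ range n, c j) * m := by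
  have hN : fermatN n ≠ 0 := Nat.succ_ne_zero _
  have hord := hc.pow_fermatN n ▸ orderOf_eq_orderOf_pow_mul_gcd (c n) hN
  refine ⟨_, Nat.gcd_dvd_right _ _, ?_, hord⟩
  refine lt_of_le_of_ne (Nat.gcd_pos_of_pos_right _ (Nat.pos_of_ne_zero hN)) fun h1 => ?_
  rw [← h1, mul_one] at hord
  refine hc.notMem_conwayL n ((hc.mem_conwayL_iff_orderOf_dvd (hc.ne_zero n)).mpr ?_)
  exact hord ▸ (hc.mem_conwayL_iff_orderOf_dvd (hc.prod_ne_zero n)).mp (prod_mem_conwayL c n)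

theorem orderOf_prod_range_succ (hc : IsConwayTower c) (n : ℕ) :
    orderOf (∏ j ∈ range (n + 1), c j) =
      orderOf (c n) / (orderOf (c n)).gcd (2 ^ 2 ^ n + 2) := by
  rw [prod_range_succ, ← hc.pow_fermatN, ← pow_succ, fermatN]
  exact orderOf_pow' _ (by positivity)

theorem orderOf_prod_range_two (hc : IsConwayTower c) : orderOf (∏ j ∈ range 2, c j) = 5 := by
  obtain ⟨m₀, hm₀, hm₀1, h₀⟩ := hc.exists_orderOf_eq_mul 0
  obtain ⟨m₁, hm₁, hm₁1, h₁⟩ := hc.exists_orderOf_eq_mul 1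
  obtain rfl : m₀ = 3 := ((Nat.dvd_prime Nat.prime_three).mp hm₀).resolve_left hm₀1.ne'
  obtain rfl : m₁ = 5 :=
    ((Nat.dvd_prime (by norm_num [fermatN])).mp hm₁).resolve_left hm₁1.ne'
  rw [prod_range_zero, orderOf_one, one_mul] at h₀
  have ha₀ : orderOf (∏ j ∈ range 1, c j) = 3 := by
    rw [hc.orderOf_prod_range_succ, h₀]
    norm_num
  rw [hc.orderOf_prod_range_succ, h₁, ha₀]
  norm_num

theorem isFermatProduct_orderOf_prod (hc : IsConwayTower c) {k : ℕ} (hk : 1 ≤ k) :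
    IsFermatProduct k (orderOf (∏ j ∈ range (k + 1), c j)) := by
  induction k, hk using Nat.le_induction with
  | base =>
    rw [hc.orderOf_prod_range_two, ← one_mul 5]
    exact isFermatProduct_zero_one.mul (by norm_num [fermatN]) (by norm_num)
  | succ k _ ih =>
    obtain ⟨m, hm, hm1, h⟩ := hc.exists_orderOf_eq_mul (k + 1)
    have hprod := ih.mul hm hm1
    rw [hc.orderOf_prod_range_succ, h, (hprod.coprime k).gcd_eq_one, Nat.div_one]
    exact hprod

end IsConwayTower

/-- For every `i ≥ 2`, there exist positive integers `α_1, …, α_i` with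
`α_j ∣ N_j` and `α_j > 1` for `1 ≤ j ≤ i`, such that the multiplicative order
of `c_i` equals `∏_{j=1}^{i} α_j`. -/
theorem conway_orderOf_c (c : ℕ → AlgebraicClosure (ZMod 2))
    (hc0 : c 0 ^ 2 + c 0 + 1 = 0)
    (hrec : ∀ i : ℕ, c (i + 1) ^ 2 + c (i + 1) + ∏ j ∈ Finset.range (i + 1), c j = 0)
    (hnot : ∀ i : ℕ, c (i + 1) ∉ conwayL c (i + 1))
    (i : ℕ) (hi : 2 ≤ i) :
    ∃ α : ℕ → ℕ, (∀ j : ℕ, 1 ≤ j → j ≤ i → α j ∣ fermatN j ∧ 1 < α j) ∧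
      orderOf (c i) = ∏ j ∈ Finset.Icc 1 i, α j := by
  have hc : IsConwayTower c := by
    refine ⟨fun n => ?_, fun n => ?_⟩ <;> cases n
    · simpa using hc0
    · exact hrec _
    · exact conwayL_zero c ▸ notMem_bot_of_sq_add_self_add_one hc0
    · exact hnot _
  obtain ⟨k, rfl⟩ : ∃ k, i = k + 1 := ⟨i - 1, by omega⟩
  obtain ⟨m, hm, hm1, h⟩ := hc.exists_orderOf_eq_mul (k + 1)
  rw [h]
  exact (hc.isFermatProduct_orderOf_prod (by omega)).mul hm hm1
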